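/- For a prime p and integer q ≥ 1, Σ_{k=1}^{p-1} ⌊k^(2q+1)/p⌋ = (B_{2q+2}(p+1) + B_{2q+2}(p) - 2·B_{2q+2}) / (2p(2q+2)) - (p^(2q) + p - 1)/2, where B_n(x) denotes the n-th Bernoulli polynomial and B_n = B_n(0) the n-th Bernoulli number. -/

import Mathlib

/-!
For odd `m` and `0 < k < p`, the residues of `k ^ m` and `(p - k) ^ m` modulo `p` are nonzero and
their sum is divisible by `k + (p - k) = p`, so they add up to exactly `p`. Pairing `k` with `p - k`,
the residues of `k ^ m` for `0 < k < p` sum to `p (p - 1) / 2`. Since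
`⌊k ^ m / p⌋ = (k ^ m - (k ^ m mod p)) / p`, the floor sum is `(∑_{k < p} k ^ m) / p - (p - 1) / 2`,
and Faulhaber's formula `B_{m+1}(n) = B_{m+1} + (m + 1) ∑_{k < n} k ^ m` turns the power sum into
Bernoulli polynomials.
-/

open Finset

theorem Nat.Prime.pow_mod_add_sub_pow_mod {p m k : ℕ} (hp : p.Prime) (hm : Odd m) (hk0 : 0 < k)
    (hkp : k < p) : k ^ m % p + (p - k) ^ m % p = p := by
  have hdvd : p ∣ k ^ m % p + (p - k) ^ m % p := by
    rw [Nat.dvd_iff_mod_eq_zero, ← Nat.add_mod, ← Nat.dvd_iff_mod_eq_zero]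
    simpa [Nat.add_sub_cancel' hkp.le] using Odd.nat_add_dvd_pow_add_pow k (p - k) hm
  have hres_ne_zero : k ^ m % p ≠ 0 := fun h =>
    Nat.not_dvd_of_pos_of_lt hk0 hkp (hp.dvd_of_dvd_pow (Nat.dvd_of_mod_eq_zero h))
  refine Nat.eq_of_dvd_of_lt_two_mul (by omega) hdvd ?_
  have := Nat.mod_lt (k ^ m) hp.pos
  have := Nat.mod_lt ((p - k) ^ m) hp.pos
  omega

theorem Nat.Prime.sum_pow_mod_mul_two {p m : ℕ} (hp : p.Prime) (hm : Odd m) :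
    (∑ k ∈ Icc 1 (p - 1), k ^ m % p) * 2 = p * (p - 1) := by
  have hreflect : ∑ k ∈ Icc 1 (p - 1), (p - k) ^ m % p = ∑ k ∈ Icc 1 (p - 1), k ^ m % p :=
    sum_nbij' (p - ·) (p - ·) (by simp only [mem_Icc]; omega) (by simp only [mem_Icc]; omega)
      (by simp only [mem_Icc]; omega) (by simp only [mem_Icc]; omega) fun _ _ => rfl
  calc (∑ k ∈ Icc 1 (p - 1), k ^ m % p) * 2
      = ∑ k ∈ Icc 1 (p - 1), (k ^ m % p + (p - k) ^ m % p) := by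
        rw [sum_add_distrib, hreflect, mul_two]
    _ = ∑ k ∈ Icc 1 (p - 1), p := sum_congr rfl fun k hk => by
        rw [mem_Icc] at hk
        exact hp.pow_mod_add_sub_pow_mod hm (by omega) (by omega)
    _ = p * (p - 1) := by simp [mul_comm]

theorem Rat.intCast_floor_natCast_div_natCast (n d : ℕ) :
    (⌊(n : ℚ) / d⌋ : ℚ) = ((n : ℚ) - (n % d : ℕ)) / d := by
  rw [Rat.floor_natCast_div_natCast, ← Int.natCast_div, Int.cast_natCast]
  rcases eq_or_ne d 0 with rfl | hd
  · simp
  rw [eq_div_iff (by exact_mod_cast hd), eq_sub_iff_add_eq]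
  exact_mod_cast Nat.div_add_mod' n d

theorem Nat.Prime.sum_floor_pow_div {p m : ℕ} (hp : p.Prime) (hm : Odd m) :
    ∑ k ∈ Icc 1 (p - 1), (⌊(k : ℚ) ^ m / p⌋ : ℚ) =
      (∑ k ∈ range p, (k : ℚ) ^ m) / p - ((p : ℚ) - 1) / 2 := by
  have hres : ∑ k ∈ Icc 1 (p - 1), ((k ^ m % p : ℕ) : ℚ) = p * ((p : ℚ) - 1) / 2 := by
    have := congrArg (Nat.cast (R := ℚ)) (hp.sum_pow_mod_mul_two hm)
    push_cast [Nat.cast_sub hp.one_le] at this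
    linarith
  have hrange : ∑ k ∈ range p, (k : ℚ) ^ m = ∑ k ∈ Icc 1 (p - 1), (k : ℚ) ^ m := by
    rw [range_eq_Ico, sum_eq_sum_Ico_succ_bot hp.pos, Nat.cast_zero, zero_pow hm.pos.ne', zero_add,
      Icc_sub_one_right_eq_Ico_of_not_isMin (by simpa using hp.ne_zero)]
  have hp0 : (p : ℚ) ≠ 0 := by exact_mod_cast hp.ne_zero
  simp_rw [← Nat.cast_pow, Rat.intCast_floor_natCast_div_natCast, ← sum_div, sum_sub_distrib,
    hres]
  push_cast
  rw [hrange]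
  field_simp

theorem Polynomial.bernoulli_succ_eval_add_one_add_eval (n m : ℕ) :
    (bernoulli (m + 1)).eval ((n : ℚ) + 1) + (bernoulli (m + 1)).eval (n : ℚ) -
        2 * _root_.bernoulli (m + 1) =
      (m + 1) * (2 * ∑ k ∈ range n, (k : ℚ) ^ m + (n : ℚ) ^ m) := by
  rw [add_comm (n : ℚ) 1, bernoulli_eval_one_add, bernoulli_succ_eval]
  push_cast
  ring

theorem stmt_5_general (p q : ℕ) (hp : p.Prime) :
    (∑ k ∈ Finset.Icc 1 (p - 1), (⌊((k : ℚ) ^ (2 * q + 1)) / p⌋ : ℚ)) =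
      ((Polynomial.bernoulli (2 * q + 2)).eval ((p : ℚ) + 1) +
        (Polynomial.bernoulli (2 * q + 2)).eval (p : ℚ) -
        2 * bernoulli (2 * q + 2)) / (2 * p * (2 * q + 2)) -
      ((p : ℚ) ^ (2 * q) + p - 1) / 2 := by
  rw [hp.sum_floor_pow_div (odd_two_mul_add_one q),
    Polynomial.bernoulli_succ_eval_add_one_add_eval]
  have hp0 : (p : ℚ) ≠ 0 := by exact_mod_cast hp.ne_zero
  push_cast
  field_simp
  ring

theorem stmt_5 (p q : ℕ) (hp : p.Prime) (hq : 1 ≤ q) :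
    (∑ k ∈ Finset.Icc 1 (p - 1), (⌊((k : ℚ) ^ (2 * q + 1)) / p⌋ : ℚ)) =
      ((Polynomial.bernoulli (2 * q + 2)).eval ((p : ℚ) + 1) +
        (Polynomial.bernoulli (2 * q + 2)).eval (p : ℚ) -
        2 * bernoulli (2 * q + 2)) / (2 * p * (2 * q + 2)) -
      ((p : ℚ) ^ (2 * q) + p - 1) / 2 :=
  stmt_5_general p q hp
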